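/- arXiv:2312.04075 — 4 statements merged into one kernel-verified Lean document; each statement's English description precedes it below -/
import Mathlib

section
/- Let A be an n×n real matrix, b ∈ ℝⁿ, f : ℝⁿ → ℝⁿ, H(r) = r - f(r), F(r) = A·r + b. Let Ω₁, Ω₂ be n×n positive diagonal matrices (diagonal matrices with strictly positive diagonal entries). Define R̄(r) = Ω₁H(r) - max(Ω₁H(r) - Ω₂(A·r + b), 0) (componentwise positive part). Then r* solves ICP(A, b, f) — i.e., H(r*) ≥ 0, F(r*) ≥ 0, H(r*)ᵀF(r*) = 0 — if and only if R̄(r*) = 0. -/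
lemma diag_mulVec {n : ℕ} (M : Matrix (Fin n) (Fin n) ℝ) (hM : M.IsDiag)
    (v : Fin n → ℝ) (i : Fin n) : M.mulVec v i = M i i * v i := by
  unfold Matrix.mulVec dotProduct
  rw [Finset.sum_eq_single i]
  · intro j _ hj; simp [hM (Ne.symm hj)]
  · simp

theorem stmt_4 (n : ℕ) (A : Matrix (Fin n) (Fin n) ℝ) (b : Fin n → ℝ)
    (f : (Fin n → ℝ) → (Fin n → ℝ))
    (H : (Fin n → ℝ) → (Fin n → ℝ)) (hH : ∀ r, H r = r - f r)
    (F : (Fin n → ℝ) → (Fin n → ℝ)) (hF : ∀ r, F r = A.mulVec r + b)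
    (Ω₁ Ω₂ : Matrix (Fin n) (Fin n) ℝ)
    (hΩ₁ : Ω₁.IsDiag) (hΩ₂ : Ω₂.IsDiag)
    (hΩ₁pos : ∀ i, 0 < Ω₁ i i) (hΩ₂pos : ∀ i, 0 < Ω₂ i i)
    (Rbar : (Fin n → ℝ) → (Fin n → ℝ))
    (hRbar : ∀ r i, Rbar r i =
      Ω₁.mulVec (H r) i - max (Ω₁.mulVec (H r) i - Ω₂.mulVec (A.mulVec r + b) i) 0)
    (r : Fin n → ℝ) :
    ((∀ i, 0 ≤ H r i) ∧ (∀ i, 0 ≤ F r i) ∧ ∑ i, H r i * F r i = 0) ↔ Rbar r = 0 := by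
  have hRb : ∀ i, Rbar r i = min (Ω₁ i i * H r i) (Ω₂ i i * F r i) := by
    intro i
    rw [hRbar, diag_mulVec Ω₁ hΩ₁, diag_mulVec Ω₂ hΩ₂, ← hF]
    rcases le_total (Ω₁ i i * H r i - Ω₂ i i * F r i) 0 with h | h
    · rw [max_eq_right h, min_eq_left (by linarith)]; ring
    · rw [max_eq_left h, min_eq_right (by linarith)]; ring
  constructor
  · rintro ⟨h1, h2, h3⟩
    have hterm : ∀ i ∈ Finset.univ, (0:ℝ) ≤ H r i * F r i :=
      fun i _ => mul_nonneg (h1 i) (h2 i)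
    have hz := (Finset.sum_eq_zero_iff_of_nonneg hterm).mp h3
    funext i
    rw [hRb i, Pi.zero_apply]
    have := hz i (Finset.mem_univ i)
    rcases mul_eq_zero.mp this with h | h
    · rw [h, mul_zero, min_eq_left (mul_nonneg (hΩ₂pos i).le (h2 i))]
    · rw [h, mul_zero, min_eq_right (mul_nonneg (hΩ₁pos i).le (h1 i))]
  · intro hz
    have hz' : ∀ i, min (Ω₁ i i * H r i) (Ω₂ i i * F r i) = 0 := by
      intro i; rw [← hRb i, hz]; rfl
    have h1 : ∀ i, 0 ≤ H r i := by
      intro i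
      have := min_le_left (Ω₁ i i * H r i) (Ω₂ i i * F r i)
      rw [hz' i] at this
      exact nonneg_of_mul_nonneg_right this (hΩ₁pos i)
    have h2 : ∀ i, 0 ≤ F r i := by
      intro i
      have := min_le_right (Ω₁ i i * H r i) (Ω₂ i i * F r i)
      rw [hz' i] at this
      exact nonneg_of_mul_nonneg_right this (hΩ₂pos i)
    refine ⟨h1, h2, Finset.sum_eq_zero fun i _ => ?_⟩
    rcases min_eq_iff.mp (hz' i) with ⟨h, _⟩ | ⟨h, _⟩
    · rcases mul_eq_zero.mp h with h | h
      · exact absurd h (ne_of_gt (hΩ₁pos i))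
      · rw [h, zero_mul]
    · rcases mul_eq_zero.mp h with h | h
      · exact absurd h (ne_of_gt (hΩ₂pos i))
      · rw [h, mul_zero]
end

section
/- Let δ : ℝ → ℝ be strictly increasing with δ(0) = 0, and let a, h ∈ ℝ. If δ(|a - h|) - δ(a) - δ(h) = 0 and it is not the case that (h ≥ 0 and a ≥ 0 and h·a = 0), then we reach a contradiction; that is, δ(|a - h|) = δ(a) + δ(h) implies h ≥ 0, a ≥ 0, and h·a = 0. -/
theorem stmt_6 (δ : ℝ → ℝ) (hδ : StrictMono δ) (h0 : δ 0 = 0) (a h : ℝ)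
    (heq : δ |a - h| = δ a + δ h) : 0 ≤ h ∧ 0 ≤ a ∧ h * a = 0 := by
  have hh : 0 ≤ h := by
    by_contra hneg
    push_neg at hneg
    have d1 : δ h < 0 := h0 ▸ hδ hneg
    have : δ |a - h| < δ a := by linarith
    have habs : |a - h| < a := hδ.lt_iff_lt.mp this
    have : a - h ≤ |a - h| := le_abs_self _
    linarith
  have ha : 0 ≤ a := by
    by_contra hneg
    push_neg at hneg
    have d1 : δ a < 0 := h0 ▸ hδ hneg
    have : δ |a - h| < δ h := by linarith
    have habs : |a - h| < h := hδ.lt_iff_lt.mp this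
    have : -(a - h) ≤ |a - h| := neg_le_abs _
    linarith
  refine ⟨hh, ha, ?_⟩
  rcases hh.eq_or_lt with he | hlt
  · simp [← he]
  rcases ha.eq_or_lt with he | hlt'
  · simp [← he]
  exfalso
  have d1 : 0 < δ h := h0 ▸ hδ hlt
  have d2 : 0 < δ a := h0 ▸ hδ hlt'
  have g1 : a < |a - h| := hδ.lt_iff_lt.mp (by linarith)
  have g2 : h < |a - h| := hδ.lt_iff_lt.mp (by linarith)
  rcases abs_cases (a - h) with ⟨he, _⟩ | ⟨he, _⟩ <;> linarith
end

section
/- Let δ : ℝ → ℝ be strictly increasing with δ(0) = 0, and let a, h ∈ ℝ. Then δ(|a - h|) = δ(a) + δ(h) if and only if h ≥ 0, a ≥ 0, and h·a = 0. -/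
theorem stmt_8 (δ : ℝ → ℝ) (hδ : StrictMono δ) (h0 : δ 0 = 0) (a h : ℝ) :
    δ |a - h| = δ a + δ h ↔ 0 ≤ h ∧ 0 ≤ a ∧ h * a = 0 := by
  have hpos : ∀ x : ℝ, 0 < x → 0 < δ x := fun x hx => h0 ▸ hδ hx
  have hneg : ∀ x : ℝ, x < 0 → δ x < 0 := fun x hx => h0 ▸ hδ hx
  constructor
  · intro heq
    have hh : 0 ≤ h := by
      by_contra hc
      push_neg at hc
      have h1 : a < |a - h| := lt_of_lt_of_le (by linarith) (le_abs_self _)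
      have h2 := hδ h1
      have h3 := hneg h hc
      linarith
    have ha : 0 ≤ a := by
      by_contra hc
      push_neg at hc
      have h1 : h < |a - h| := by
        rw [abs_sub_comm]
        exact lt_of_lt_of_le (by linarith) (le_abs_self _)
      have h2 := hδ h1
      have h3 := hneg a hc
      linarith
    refine ⟨hh, ha, ?_⟩
    by_contra hc
    have hh' : 0 < h := lt_of_le_of_ne hh (fun e => hc (by rw [← e]; ring))
    have ha' : 0 < a := lt_of_le_of_ne ha (fun e => hc (by rw [← e]; ring))
    rcases le_total a h with hle | hle
    · have h1 : |a - h| ≤ h := by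
        rw [abs_sub_comm, abs_of_nonneg (by linarith)]; linarith
      have h2 := hδ.le_iff_le.mpr h1
      have h3 := hpos a ha'
      linarith
    · have h1 : |a - h| ≤ a := by
        rw [abs_of_nonneg (by linarith)]; linarith
      have h2 := hδ.le_iff_le.mpr h1
      have h3 := hpos h hh'
      linarith
  · rintro ⟨hh, ha, hma⟩
    rcases mul_eq_zero.mp hma with e | e
    · rw [e, sub_zero, abs_of_nonneg ha, h0, add_zero]
    · rw [e, zero_sub, abs_neg, abs_of_nonneg hh, h0, zero_add]
end

section
/- Let A be an n×n real matrix, b ∈ ℝⁿ, f : ℝⁿ → ℝⁿ, H(r) = r - f(r), F(r) = A·r + b. Let δ : ℝ → ℝ be strictly increasing with δ(0) = 0. Define G : ℝⁿ → ℝⁿ componentwise by Gᵢ(r) = δ(|F(r)ᵢ - H(r)ᵢ|) - δ(F(r)ᵢ) - δ(H(r)ᵢ). Then r* solves ICP(A, b, f) — i.e., H(r*) ≥ 0, F(r*) ≥ 0, H(r*)ᵀF(r*) = 0 — if and only if G(r*) = 0. -/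
lemma key_scalar (δ : ℝ → ℝ) (hδ : StrictMono δ) (h0 : δ 0 = 0) (a c : ℝ) :
    δ |c - a| - δ c - δ a = 0 ↔ (0 ≤ a ∧ 0 ≤ c ∧ a * c = 0) := by
  have hneg : ∀ x : ℝ, x < 0 → δ x < 0 := fun x hx => h0 ▸ hδ hx
  have hpos : ∀ x : ℝ, 0 < x → 0 < δ x := fun x hx => h0 ▸ hδ hx
  constructor
  · intro h
    have ha : 0 ≤ a := by
      by_contra hna
      push_neg at hna
      have h1 : c < |c - a| := lt_of_lt_of_le (by linarith) (le_abs_self _)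
      have := hδ h1
      have := hneg a hna
      linarith
    have hc : 0 ≤ c := by
      by_contra hnc
      push_neg at hnc
      have h1 : a < |c - a| := by
        have : a < a - c := by linarith
        calc a < a - c := this
          _ = -(c - a) := by ring
          _ ≤ |c - a| := neg_le_abs _
      have := hδ h1
      have := hneg c hnc
      linarith
    refine ⟨ha, hc, ?_⟩
    by_contra hac
    have ha' : 0 < a := lt_of_le_of_ne ha (by intro e; exact hac (by rw [← e]; ring))
    have hc' : 0 < c := lt_of_le_of_ne hc (by intro e; exact hac (by rw [← e]; ring))
    rcases le_total a c with hle | hle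
    · have h1 : |c - a| < c := by
        rw [abs_of_nonneg (by linarith)]; linarith
      have := hδ h1
      have := hpos a ha'
      linarith
    · have h1 : |c - a| < a := by
        rw [abs_of_nonpos (by linarith)]; simp; linarith
      have := hδ h1
      have := hpos c hc'
      linarith
  · rintro ⟨ha, hc, hac⟩
    rcases mul_eq_zero.mp hac with h | h
    · subst h
      rw [sub_zero, abs_of_nonneg hc, h0]; ring
    · subst h
      rw [zero_sub, abs_neg, abs_of_nonneg ha, h0]; ring

theorem stmt_9 (n : ℕ) (A : Matrix (Fin n) (Fin n) ℝ) (b : Fin n → ℝ)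
    (f : (Fin n → ℝ) → (Fin n → ℝ))
    (H : (Fin n → ℝ) → (Fin n → ℝ)) (hH : ∀ r, H r = r - f r)
    (F : (Fin n → ℝ) → (Fin n → ℝ)) (hF : ∀ r, F r = A.mulVec r + b)
    (δ : ℝ → ℝ) (hδ : StrictMono δ) (h0 : δ 0 = 0)
    (G : (Fin n → ℝ) → (Fin n → ℝ))
    (hG : ∀ r i, G r i = δ |F r i - H r i| - δ (F r i) - δ (H r i))
    (r : Fin n → ℝ) :
    ((∀ i, 0 ≤ H r i) ∧ (∀ i, 0 ≤ F r i) ∧ ∑ i, H r i * F r i = 0) ↔ G r = 0 := by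
  constructor
  · rintro ⟨hHr, hFr, hsum⟩
    have hzero : ∀ i ∈ Finset.univ, H r i * F r i = 0 := by
      rw [← Finset.sum_eq_zero_iff_of_nonneg
        (fun i _ => mul_nonneg (hHr i) (hFr i))]
      exact hsum
    funext i
    rw [hG]
    exact (key_scalar δ hδ h0 (H r i) (F r i)).mpr
      ⟨hHr i, hFr i, hzero i (Finset.mem_univ i)⟩
  · intro hGr
    have hi : ∀ i, 0 ≤ H r i ∧ 0 ≤ F r i ∧ H r i * F r i = 0 := by
      intro i
      have : G r i = 0 := by rw [hGr]; rfl
      rw [hG] at this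
      exact (key_scalar δ hδ h0 (H r i) (F r i)).mp this
    exact ⟨fun i => (hi i).1, fun i => (hi i).2.1,
      Finset.sum_eq_zero (fun i _ => (hi i).2.2)⟩
end
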